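/- Let R ≅ R₁ × R₂, where R₁ and R₂ are commutative rings with identity each having exactly one nonzero proper ideal. Then the metric dimension of the prime ideal sum graph PIS(R) equals 3. -/

import Mathlib

open scoped Classical

/-- The vertex set of the prime ideal sum graph: nonzero proper ideals of `R`. -/
abbrev PISVertex (R : Type*) [CommRing R] := {I : Ideal R // I ≠ ⊥ ∧ I ≠ ⊤}

/-- The prime ideal sum graph of a commutative ring `R`: vertices are nonzero proper
ideals, and two distinct vertices `I`, `J` are adjacent iff `I + J` is a prime ideal. -/
def PIS (R : Type*) [CommRing R] : SimpleGraph (PISVertex R) where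
  Adj I J := I ≠ J ∧ (I.1 + J.1).IsPrime
  symm := ⟨fun I J h => ⟨h.1.symm, by rw [add_comm]; exact h.2⟩⟩
  loopless := ⟨fun I h => h.1 rfl⟩

/-- A set `S` of vertices is a resolving set if any two distinct vertices not both in `S`
are distinguished by the distance to some vertex of `S`. -/
def IsResolvingSet {V : Type*} (G : SimpleGraph V) (S : Set V) : Prop :=
  ∀ u v : V, u ≠ v → ¬(u ∈ S ∧ v ∈ S) → ∃ w ∈ S, G.dist u w ≠ G.dist v w

/-- The metric dimension of a graph: the least cardinality of a resolving set. -/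
noncomputable def metricDim {V : Type*} (G : SimpleGraph V) : ℕ∞ :=
  ⨅ S : {S : Set V // IsResolvingSet G S}, (S : Set V).encard

/-!
Each factor `Rᵢ` has the three ideals `⊥ < Mᵢ < ⊤`, so the ideals of `R` form the lattice
`Fin 3 × Fin 3`, with sums computed componentwise. The zero ideal of `Rᵢ` is not prime (a ring with
finitely many ideals is Artinian, and an Artinian domain is a field), so the primes of `R` are
`M₁ × R₂` and `R₁ × M₂`, i.e. `(1, ⊤)` and `(⊤, 1)`. Hence `PIS R` is a fixed graph on seven
vertices. It has diameter two, so distances are determined by adjacency, and a finite check shows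
that `{(0, 1), (0, ⊤), (1, 0)}` is resolving while no set of two vertices is.
-/

namespace SimpleGraph

variable {V W : Type*} {G : SimpleGraph V} {H : SimpleGraph W}

lemma edist_map_le (f : G →g H) (u v : V) : H.edist (f u) (f v) ≤ G.edist u v :=
  le_iInf fun p => by simpa using (p.map f).edist_le

lemma Iso.edist_eq (φ : G ≃g H) (u v : V) : H.edist (φ u) (φ v) = G.edist u v :=
  le_antisymm (edist_map_le φ.toHom u v) <| by
    simpa using edist_map_le φ.symm.toHom (φ u) (φ v)

lemma Iso.dist_eq (φ : G ≃g H) (u v : V) : H.dist (φ u) (φ v) = G.dist u v :=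
  congrArg ENat.toNat (φ.edist_eq u v)

lemma dist_eq_ite_of_exists_adj_adj [DecidableEq V] [DecidableRel G.Adj]
    (h : ∀ u v, u ≠ v → ¬G.Adj u v → ∃ w, G.Adj u w ∧ G.Adj v w) (u v : V) :
    G.dist u v = if u = v then 0 else if G.Adj u v then 1 else 2 := by
  split_ifs with huv hadj
  · rw [huv, dist_self]
  · exact dist_eq_one_iff_adj.2 hadj
  · obtain ⟨w, huw, hvw⟩ := h u v huv hadj
    have h2 : G.edist u v = 2 :=
      edist_eq_two_iff.2 ⟨huv, hadj, w, (G.mem_commonNeighbors).2 ⟨huw, hvw⟩⟩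
    simp [dist, h2]

end SimpleGraph

section MetricDimension

variable {V W : Type*} {G : SimpleGraph V} {H : SimpleGraph W}

lemma IsResolvingSet.mono {S T : Set V} (hS : IsResolvingSet G S) (hST : S ⊆ T) :
    IsResolvingSet G T := fun u v huv hT => by
  obtain ⟨w, hw, hd⟩ := hS u v huv fun h => hT ⟨hST h.1, hST h.2⟩
  exact ⟨w, hST hw, hd⟩

lemma IsResolvingSet.image {S : Set V} (hS : IsResolvingSet G S) (φ : G ≃g H) :
    IsResolvingSet H (φ '' S) := by
  intro u v huv hS'
  obtain ⟨w, hw, hd⟩ := hS (φ.symm u) (φ.symm v) (φ.symm.injective.ne huv) fun h =>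
    hS' ⟨by simpa using Set.mem_image_of_mem φ h.1, by simpa using Set.mem_image_of_mem φ h.2⟩
  refine ⟨φ w, Set.mem_image_of_mem φ hw, ?_⟩
  simpa [← φ.dist_eq (φ.symm u), ← φ.dist_eq (φ.symm v)] using hd

lemma metricDim_le_encard {S : Set V} (hS : IsResolvingSet G S) : metricDim G ≤ S.encard :=
  iInf_le_of_le ⟨S, hS⟩ le_rfl

lemma metricDim_le_of_iso (φ : G ≃g H) : metricDim H ≤ metricDim G :=
  le_iInf fun ⟨S, hS⟩ => (metricDim_le_encard (hS.image φ)).trans_eq (φ.injective.encard_image S)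

lemma metricDim_congr (φ : G ≃g H) : metricDim G = metricDim H :=
  le_antisymm (metricDim_le_of_iso φ.symm) (metricDim_le_of_iso φ)

lemma Set.exists_subset_pair_of_encard_lt_three {α : Type*} [Nonempty α] {s : Set α}
    (hs : s.encard < 3) : ∃ a b, s ⊆ {a, b} := by
  obtain ⟨n, hn⟩ := ENat.ne_top_iff_exists.1 (hs.trans (ENat.natCast_lt_top 3)).ne
  have : n < 3 := by exact_mod_cast hn ▸ hs
  interval_cases n
  · obtain rfl := Set.encard_eq_zero.1 hn.symm
    exact ⟨Classical.arbitrary α, Classical.arbitrary α, Set.empty_subset _⟩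
  · obtain ⟨a, rfl⟩ := Set.encard_eq_one.1 hn.symm
    exact ⟨a, a, by simp⟩
  · obtain ⟨a, b, -, rfl⟩ := Set.encard_eq_two.1 hn.symm
    exact ⟨a, b, subset_rfl⟩

lemma three_le_metricDim [Nonempty V] (h : ∀ a b : V, ¬IsResolvingSet G {a, b}) :
    3 ≤ metricDim G :=
  le_iInf fun ⟨S, hS⟩ => not_lt.1 fun hlt => by
    obtain ⟨a, b, hab⟩ := Set.exists_subset_pair_of_encard_lt_three hlt
    exact h a b (hS.mono hab)

end MetricDimension

def supGraph (L : Type*) [Lattice L] [BoundedOrder L] (P : L → Prop) :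
    SimpleGraph {x : L // x ≠ ⊥ ∧ x ≠ ⊤} where
  Adj x y := x ≠ y ∧ P (x.1 ⊔ y.1)
  symm := ⟨fun x y h => ⟨h.1.symm, sup_comm x.1 y.1 ▸ h.2⟩⟩
  loopless := ⟨fun _ h => h.1 rfl⟩

section SupGraph

variable {L L' : Type*} [Lattice L] [BoundedOrder L] [Lattice L'] [BoundedOrder L']

instance [DecidableEq L] (P : L → Prop) [DecidablePred P] : DecidableRel (supGraph L P).Adj :=
  fun _ _ => instDecidableAnd

def supGraph.congr {P : L → Prop} {P' : L' → Prop} (ψ : L ≃o L') (hP : ∀ x, P' (ψ x) ↔ P x) :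
    supGraph L P ≃g supGraph L' P' where
  toEquiv := ψ.toEquiv.subtypeEquiv fun x => by simp
  map_rel_iff' {x y} := by
    simp [supGraph, ← map_sup, hP, Subtype.ext_iff]

lemma PIS_eq_supGraph (R : Type*) [CommRing R] : PIS R = supGraph (Ideal R) Ideal.IsPrime := by
  ext I J
  simp [PIS, supGraph, Submodule.add_eq_sup]

end SupGraph

lemma strictMono_vecThree {α : Type*} [PartialOrder α] [BoundedOrder α] {a : α}
    (ha : a ≠ ⊥ ∧ a ≠ ⊤) : StrictMono ![⊥, a, ⊤] :=
  Fin.strictMono_iff_lt_succ.2 fun i => by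
    fin_cases i
    exacts [bot_lt_iff_ne_bot.2 ha.1, lt_top_iff_ne_top.2 ha.2]

@[simps! apply]
def OrderIso.prodCongr {α β γ δ : Type*} [Preorder α] [Preorder β] [Preorder γ] [Preorder δ]
    (e₁ : α ≃o β) (e₂ : γ ≃o δ) : α × γ ≃o β × δ where
  toEquiv := e₁.toEquiv.prodCongr e₂.toEquiv
  map_rel_iff' := by simp [Prod.le_def]

namespace Ideal

lemma isPrime_map_equiv_iff {R S : Type*} [CommRing R] [CommRing S] (e : R ≃+* S)
    {I : Ideal R} : (I.map e).IsPrime ↔ I.IsPrime := by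
  refine ⟨fun h => ?_, fun h => map_isPrime_of_equiv e⟩
  have := h.comap e
  rwa [comap_map_of_bijective _ e.bijective] at this

lemma isPrime_prod_iff {R S : Type*} [CommRing R] [CommRing S] {I : Ideal R} {J : Ideal S} :
    (I.prod J).IsPrime ↔ I.IsPrime ∧ J = ⊤ ∨ I = ⊤ ∧ J.IsPrime := by
  simp only [ideal_prod_prime, prod_inj]
  aesop

variable {A : Type*} [CommRing A] {M : Ideal A}

lemma surjective_vecThree (huniq : ∀ I : Ideal A, I ≠ ⊥ ∧ I ≠ ⊤ → I = M) :
    Function.Surjective ![⊥, M, ⊤] := fun I => by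
  by_cases hb : I = ⊥
  · exact ⟨0, hb.symm⟩
  by_cases ht : I = ⊤
  · exact ⟨2, ht.symm⟩
  · exact ⟨1, (huniq I ⟨hb, ht⟩).symm⟩

lemma isPrime_iff_eq_of_unique (hM : M ≠ ⊥ ∧ M ≠ ⊤)
    (huniq : ∀ I : Ideal A, I ≠ ⊥ ∧ I ≠ ⊤ → I = M) (I : Ideal A) : I.IsPrime ↔ I = M := by
  have hmax : M.IsMaximal := isMaximal_def.2
    ⟨hM.2, fun J hJ => by_contra fun hJ' => hJ.ne (huniq J ⟨ne_bot_of_gt hJ, hJ'⟩).symm⟩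
  have hbot : ¬(⊥ : Ideal A).IsPrime := fun hbot => by
    have : IsDomain A := IsDomain.of_bot_isPrime A
    have : Finite (Ideal A) := Finite.of_surjective _ (surjective_vecThree huniq)
    exact Ring.not_isField_of_ne_of_ne hM.1 hM.2 (IsArtinianRing.isField_of_isDomain A)
  refine ⟨fun hI => huniq I ⟨?_, hI.ne_top⟩, fun h => h ▸ hmax.isPrime⟩
  rintro rfl
  exact hbot hI

lemma exists_orderIso_finThree (h : ∃! M : Ideal A, M ≠ ⊥ ∧ M ≠ ⊤) :
    ∃ ψ : Ideal A ≃o Fin 3, ∀ I, I.IsPrime ↔ ψ I = 1 := by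
  obtain ⟨M, hM, huniq⟩ := h
  let ψ := StrictMono.orderIsoOfSurjective _ (strictMono_vecThree hM) (surjective_vecThree huniq)
  refine ⟨ψ.symm, fun I => ?_⟩
  rw [isPrime_iff_eq_of_unique hM huniq, ψ.symm_apply_eq]
  rfl

lemma exists_orderIso_finThree_prod {B : Type*} [CommRing B]
    (hA : ∃! M : Ideal A, M ≠ ⊥ ∧ M ≠ ⊤) (hB : ∃! M : Ideal B, M ≠ ⊥ ∧ M ≠ ⊤) :
    ∃ ψ : Ideal (A × B) ≃o Fin 3 × Fin 3, ∀ I, I.IsPrime ↔ ψ I = (1, ⊤) ∨ ψ I = (⊤, 1) := by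
  obtain ⟨ψA, hψA⟩ := exists_orderIso_finThree hA
  obtain ⟨ψB, hψB⟩ := exists_orderIso_finThree hB
  refine ⟨idealProdEquiv.trans (ψA.prodCongr ψB), fun I => ?_⟩
  conv_lhs => rw [ideal_prod_eq I, isPrime_prod_iff, hψA, hψB]
  simp [idealProdEquiv]

end Ideal

set_option synthInstance.maxSize 2000 in
theorem metricDim_supGraph_finThree_sq :
    metricDim (supGraph (Fin 3 × Fin 3) fun x => x = (1, ⊤) ∨ x = (⊤, 1)) = 3 := by
  set G := supGraph (Fin 3 × Fin 3) fun x => x = (1, ⊤) ∨ x = (⊤, 1)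
  have hdist := G.dist_eq_ite_of_exists_adj_adj (by decide)
  have : Nonempty {x : Fin 3 × Fin 3 // x ≠ ⊥ ∧ x ≠ ⊤} := ⟨⟨(0, 1), by decide⟩⟩
  refine le_antisymm ?_ (three_le_metricDim ?_)
  · let S : Set {x : Fin 3 × Fin 3 // x ≠ ⊥ ∧ x ≠ ⊤} :=
      {⟨(0, 1), by decide⟩, ⟨(0, ⊤), by decide⟩, ⟨(1, 0), by decide⟩}
    have hS : IsResolvingSet G S := by
      simp only [IsResolvingSet, hdist, S, Set.mem_insert_iff, Set.mem_singleton_iff]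
      decide
    refine (metricDim_le_encard hS).trans_eq
      (Set.encard_eq_three.2 ⟨_, _, _, ?_, ?_, ?_, rfl⟩) <;> decide
  · simp only [IsResolvingSet, hdist, Set.mem_insert_iff, Set.mem_singleton_iff]
    decide

/-- If `R` is isomorphic to a product of two rings each having exactly one nonzero proper
ideal, then the metric dimension of `PIS R` equals 3. -/
theorem metricDim_PIS_two_factors {R R₁ R₂ : Type*} [CommRing R] [CommRing R₁] [CommRing R₂]
    (h₁ : ∃! I : Ideal R₁, I ≠ ⊥ ∧ I ≠ ⊤) (h₂ : ∃! I : Ideal R₂, I ≠ ⊥ ∧ I ≠ ⊤)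
    (e : R ≃+* (R₁ × R₂)) :
    metricDim (PIS R) = 3 := by
  obtain ⟨ψ, hψ⟩ := Ideal.exists_orderIso_finThree_prod h₁ h₂
  let φ : Ideal R ≃o Fin 3 × Fin 3 := e.idealComapOrderIso.symm.trans ψ
  have hφ (I : Ideal R) : (φ I = (1, ⊤) ∨ φ I = (⊤, 1)) ↔ I.IsPrime :=
    (hψ (I.map e)).symm.trans (Ideal.isPrime_map_equiv_iff e)
  rw [PIS_eq_supGraph,
    metricDim_congr (supGraph.congr φ (P' := fun x => x = (1, ⊤) ∨ x = (⊤, 1)) hφ),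
    metricDim_supGraph_finThree_sq]
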